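/- Define a(n) = ⌊nΦ⌋ for nonnegative integers n, where Φ = (1+√5)/2 is the golden mean. Then for every positive integer n, a(a(n) − n) = a(a(n) − 1) − a(n) + 1. -/

import Mathlib

/-- The golden mean Φ = (1+√5)/2. -/
noncomputable def goldenMean : ℝ := (1 + Real.sqrt 5) / 2

/-- The lower Wythoff sequence `a(n) = ⌊nΦ⌋`, defined for nonnegative integers `n`. -/
noncomputable def lowerWythoff (n : ℕ) : ℤ := ⌊(n : ℝ) * goldenMean⌋

theorem goldenMean_eq : goldenMean = Real.goldenRatio := rfl

/-- For every positive integer `n`, `a(a(n) − n) = a(a(n) − 1) − a(n) + 1`.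
(Note that `a(n) ≥ n` for `n ≥ 0`, so `a(n) − n` and `a(n) − 1` are nonnegative
integers for `n ≥ 1`; we pass them to `a` via `Int.toNat`.) -/
theorem lowerWythoff_hofstadter (n : ℕ) (hn : 0 < n) :
    lowerWythoff (lowerWythoff n - (n : ℤ)).toNat =
      lowerWythoff (lowerWythoff n - 1).toNat - lowerWythoff n + 1 := by
  have hsq : goldenMean ^ 2 = goldenMean + 1 := by rw [goldenMean_eq]; exact Real.goldenRatio_sq
  have hφ1 : 1 < goldenMean := by rw [goldenMean_eq]; exact Real.one_lt_goldenRatio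
  have hφ2 : goldenMean < 2 := by rw [goldenMean_eq]; exact Real.goldenRatio_lt_two
  set φ := goldenMean
  set x : ℝ := (n : ℝ) * φ with hx
  have hn1 : (1 : ℝ) ≤ (n : ℝ) := by exact_mod_cast hn
  have hxirr : Irrational x := by
    have h := Real.goldenRatio_irrational.natCast_mul (m := n) hn.ne'
    exact h
  set a : ℤ := ⌊x⌋ with ha
  have han : (n : ℤ) ≤ a := Int.le_floor.2 (by push_cast; nlinarith)
  have ha1 : (1 : ℤ) ≤ a := le_trans (by exact_mod_cast hn) han
  have hWn : lowerWythoff n = a := rfl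
  set θ : ℝ := x - a with hθ
  have hθ0 : 0 < θ := by
    have hne : x ≠ (a : ℝ) := fun h => hxirr ⟨a, h.symm⟩
    have hfl := Int.floor_le x
    rw [hθ]
    rcases lt_or_eq_of_le hfl with h | h
    · linarith
    · exact absurd h.symm hne
  have hθ1 : θ < 1 := by
    have := Int.lt_floor_add_one x
    rw [hθ]; linarith
  have hax : (a : ℝ) = (n : ℝ) * φ - θ := by rw [hθ, hx]; ring
  -- cast facts for toNat
  have ht1 : (((a - (n : ℤ)).toNat : ℕ) : ℝ) = (a : ℝ) - n := by
    have h : ((a - (n : ℤ)).toNat : ℤ) = a - n := Int.toNat_of_nonneg (by omega)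
    exact_mod_cast congrArg (fun z : ℤ => (z : ℝ)) h
  have ht2 : (((a - 1).toNat : ℕ) : ℝ) = (a : ℝ) - 1 := by
    have h : ((a - 1).toNat : ℤ) = a - 1 := Int.toNat_of_nonneg (by omega)
    exact_mod_cast congrArg (fun z : ℤ => (z : ℝ)) h
  have hL : lowerWythoff (a - (n : ℤ)).toNat = ⌊((a : ℝ) - n) * φ⌋ := by
    unfold lowerWythoff; rw [ht1]
  have hR : lowerWythoff (a - 1).toNat = ⌊((a : ℝ) - 1) * φ⌋ := by
    unfold lowerWythoff; rw [ht2]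
  have hkey1 : ((a : ℝ) - n) * φ = (n : ℝ) - θ * φ := by
    linear_combination (n : ℝ) * hsq + φ * hax
  have hkey2 : ((a : ℝ) - 1) * φ = (n : ℝ) + (a : ℝ) + θ - (θ + 1) * φ := by
    linear_combination (n : ℝ) * hsq + (φ - 1) * hax
  clear_value φ x a θ
  rw [hWn, hL, hR]
  have hφ0 : (0 : ℝ) < φ := by linarith
  rcases le_or_gt (θ * φ) 1 with hc | hc
  · -- θφ ≤ 1
    have e1 : ⌊((a : ℝ) - n) * φ⌋ = (n : ℤ) - 1 := by
      rw [hkey1, Int.floor_eq_iff]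
      constructor
      · push_cast; linarith [hc]
      · push_cast; linarith [mul_pos hθ0 hφ0]
    have e2 : ⌊((a : ℝ) - 1) * φ⌋ = (n : ℤ) + a - 2 := by
      have hid : (φ - 1) * φ = 1 := by linear_combination hsq
      have hθle : θ ≤ φ - 1 := by
        by_contra hcon
        push_neg at hcon
        have := mul_lt_mul_of_pos_right hcon hφ0
        rw [hid] at this
        linarith
      have hb1 : -2 ≤ θ - (θ + 1) * φ := by
        have key : (2 + θ - (θ + 1) * φ) * φ = φ - θ - 1 := by
          linear_combination (-(θ + 1)) * hsq
        have hpos : 0 ≤ (2 + θ - (θ + 1) * φ) * φ := by rw [key]; linarith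
        by_contra hcon
        push_neg at hcon
        have := mul_neg_of_neg_of_pos (show 2 + θ - (θ + 1) * φ < 0 by linarith) hφ0
        linarith
      have hb2 : θ - (θ + 1) * φ < -1 := by
        have key : ((θ + 1) * φ - θ - 1) = (θ + 1) * (φ - 1) := by ring
        have : 0 < (θ + 1) * (φ - 1) := mul_pos (by linarith) (by linarith)
        linarith [key ▸ this]
      rw [hkey2, Int.floor_eq_iff]
      constructor
      · push_cast; linarith
      · push_cast; linarith
    rw [e1, e2]; ring
  · -- θφ > 1
    have h2 : θ * φ < 2 := by
      have := mul_lt_mul_of_pos_right hθ1 hφ0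
      linarith
    have hθφ : φ - 1 < θ := by
      by_contra hcon
      push_neg at hcon
      have hle : θ * φ ≤ (φ - 1) * φ := mul_le_mul_of_nonneg_right hcon hφ0.le
      have hid : (φ - 1) * φ = 1 := by linear_combination hsq
      linarith
    have e1 : ⌊((a : ℝ) - n) * φ⌋ = (n : ℤ) - 2 := by
      rw [hkey1, Int.floor_eq_iff]
      constructor
      · push_cast; linarith [h2]
      · push_cast; linarith [hc]
    have e2 : ⌊((a : ℝ) - 1) * φ⌋ = (n : ℤ) + a - 3 := by
      have hb1 : -3 ≤ θ - (θ + 1) * φ := by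
        have key : (3 + θ - (θ + 1) * φ) * φ = 2 * φ - θ - 1 := by
          linear_combination (-(θ + 1)) * hsq
        have hpos : 0 < (3 + θ - (θ + 1) * φ) * φ := by rw [key]; linarith
        by_contra hcon
        push_neg at hcon
        have := mul_nonpos_of_nonpos_of_nonneg (by linarith : 3 + θ - (θ + 1) * φ ≤ 0) hφ0.le
        linarith
      have hb2 : θ - (θ + 1) * φ < -2 := by
        have key : ((θ + 1) * φ - θ - 2) * φ = θ + 1 - φ := by
          linear_combination (θ + 1) * hsq
        have hpos : 0 < ((θ + 1) * φ - θ - 2) * φ := by rw [key]; linarith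
        by_contra hcon
        push_neg at hcon
        have := mul_nonpos_of_nonpos_of_nonneg (by linarith : (θ + 1) * φ - θ - 2 ≤ 0) hφ0.le
        linarith
      rw [hkey2, Int.floor_eq_iff]
      constructor
      · push_cast; linarith
      · push_cast; linarith
    rw [e1, e2]; ring
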